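/- Let X be a Banach space and suppose X has property U in X** and X* is strictly convex. Then every closed subspace Y of X has property U in X** (i.e., X is totally smooth in its bidual). Conversely, if every closed subspace of X has property U in X**, then X* is strictly convex and X has property U in X**. -/

import Mathlib

/-!
A norm-preserving extension `F ∈ X***` of `g ∈ Y*` restricts along `J : X → X**` to a
norm-preserving extension `F ∘ J ∈ X*` of `g`, and `F` is itself a norm-preserving extension of
`F ∘ J`. So unique extension from `Y` to `X**` amounts to unique extension from `Y` to `X` followed
by unique extension from `X` to `X**`. Taking `Y = X` gives property U, and the first step holds for
every closed `Y` iff `X*` is strictly convex (Taylor–Foguel). For the harder half of Taylor–Foguel: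
if `‖f₁‖ = ‖f₂‖ = 1`, `‖f₁ + f₂‖ = 2` and `f₁ ≠ f₂`, then `f₁` restricted to `ker (f₁ - f₂)` still
has norm `1`, because vectors almost norming `f₁ + f₂` lie almost in that kernel; so `f₁` and `f₂`
are two norm-preserving extensions of that restriction.
-/

open NormedSpace

noncomputable instance {X : Type*} [SeminormedAddCommGroup X] [NormedSpace ℝ X] :
    SeminormedAddCommGroup (StrongDual ℝ (StrongDual ℝ X)) :=
  ContinuousLinearMap.toSeminormedAddCommGroup

noncomputable instance {X : Type*} [SeminormedAddCommGroup X] [NormedSpace ℝ X] :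
    NormedSpace ℝ (StrongDual ℝ (StrongDual ℝ X)) :=
  ContinuousLinearMap.toNormedSpace

/-- The adjoint `T* : X* → Y*` of a bounded operator `T : Y → X`. -/
noncomputable def adj {Y X : Type*} [SeminormedAddCommGroup Y] [NormedSpace ℝ Y]
    [SeminormedAddCommGroup X] [NormedSpace ℝ X] (T : Y →L[ℝ] X) :
    StrongDual ℝ X →L[ℝ] StrongDual ℝ Y :=
  LinearMap.mkContinuous
    { toFun := fun f => f.comp T
      map_add' := fun f g => by ext y; simp
      map_smul' := fun c f => by ext y; simp }
    ‖T‖ (fun f => by simpa [mul_comm] using f.opNorm_comp_le T)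

/-- The natural projection `π_X : X*** → X***` onto `X*`. -/
noncomputable def piX (X : Type*) [SeminormedAddCommGroup X] [NormedSpace ℝ X] :
    StrongDual ℝ (StrongDual ℝ (StrongDual ℝ X)) →L[ℝ] StrongDual ℝ (StrongDual ℝ (StrongDual ℝ X)) :=
  (inclusionInDoubleDual ℝ (StrongDual ℝ X)).comp (adj (inclusionInDoubleDual ℝ X))

/-- The triple adjoint `T*** : X*** → Y***` of `T : Y → X`. -/
noncomputable def adj3 {Y X : Type*} [SeminormedAddCommGroup Y] [NormedSpace ℝ Y]
    [SeminormedAddCommGroup X] [NormedSpace ℝ X] (T : Y →L[ℝ] X) :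
    StrongDual ℝ (StrongDual ℝ (StrongDual ℝ X)) →L[ℝ] StrongDual ℝ (StrongDual ℝ (StrongDual ℝ Y)) :=
  adj (adj (adj T))

section Extension

variable {E F G : Type*} [SeminormedAddCommGroup E] [NormedSpace ℝ E]
  [SeminormedAddCommGroup F] [NormedSpace ℝ F] [SeminormedAddCommGroup G] [NormedSpace ℝ G]

def HasUniqueNormPreservingExtension (T : E →L[ℝ] F) (g : StrongDual ℝ E) : Prop :=
  ∃! f : StrongDual ℝ F, (∀ x, f (T x) = g x) ∧ ‖f‖ = ‖g‖

lemma norm_le_of_apply_eq {T : E →L[ℝ] F} (hT : ‖T‖ ≤ 1) {g : StrongDual ℝ E}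
    {f : StrongDual ℝ F} (h : ∀ x, f (T x) = g x) : ‖g‖ ≤ ‖f‖ := by
  have hg : g = f.comp T := by ext x; exact (h x).symm
  calc ‖g‖ = ‖f.comp T‖ := by rw [hg]
    _ ≤ ‖f‖ * ‖T‖ := f.opNorm_comp_le T
    _ ≤ ‖f‖ := mul_le_of_le_one_right (norm_nonneg f) hT

lemma norm_adj_le (T : E →L[ℝ] F) : ‖adj T‖ ≤ ‖T‖ :=
  LinearMap.mkContinuous_norm_le _ (norm_nonneg T) _

theorem HasUniqueNormPreservingExtension.comp {S : E →L[ℝ] F} {T : F →L[ℝ] G}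
    (hS : ‖S‖ ≤ 1) (hT : ‖T‖ ≤ 1) {g : StrongDual ℝ E}
    (hg : HasUniqueNormPreservingExtension S g)
    (hf : ∀ f : StrongDual ℝ F, HasUniqueNormPreservingExtension T f) :
    HasUniqueNormPreservingExtension (T.comp S) g := by
  obtain ⟨f, ⟨hfg, hnf⟩, hf_unique⟩ := hg
  obtain ⟨H, ⟨hHf, hnH⟩, hH_unique⟩ := hf f
  refine ⟨H, ⟨fun x => (hHf (S x)).trans (hfg x), hnH.trans hnf⟩, ?_⟩
  rintro H' ⟨hH'g, hnH'⟩
  have hH'T : H'.comp T = f := by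
    refine hf_unique _ ⟨hH'g, le_antisymm ?_ (norm_le_of_apply_eq hS hH'g)⟩
    exact (norm_le_of_apply_eq hT fun _ => rfl).trans_eq hnH'
  exact hH_unique H' ⟨fun y => by rw [← hH'T]; rfl, hnH'.trans hnf.symm⟩

theorem HasUniqueNormPreservingExtension.of_comp_inclusionInDoubleDual {S : E →L[ℝ] F}
    (hS : ‖S‖ ≤ 1) {g : StrongDual ℝ E}
    (h : HasUniqueNormPreservingExtension ((inclusionInDoubleDual ℝ F).comp S) g) :
    HasUniqueNormPreservingExtension S g := by
  obtain ⟨H, ⟨hHg, hnH⟩, hH_unique⟩ := h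
  refine ⟨H.comp (inclusionInDoubleDual ℝ F),
    ⟨hHg, le_antisymm ?_ (norm_le_of_apply_eq hS hHg)⟩, ?_⟩
  · exact (norm_le_of_apply_eq (inclusionInDoubleDual_norm_le ℝ F) fun _ => rfl).trans_eq hnH
  · rintro f ⟨hfg, hnf⟩
    have hfH : inclusionInDoubleDual ℝ (StrongDual ℝ F) f = H := by
      refine hH_unique _ ⟨hfg, ?_⟩
      rw [← hnf]
      exact (inclusionInDoubleDualLi ℝ (E := StrongDual ℝ F)).norm_map f
    ext x
    rw [← hfH]
    rfl

end Extension

theorem HasUniqueNormPreservingExtension.of_comp_linearIsometryEquiv {E F G : Type*}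
    [NormedAddCommGroup E] [NormedSpace ℝ E] [NormedAddCommGroup F] [NormedSpace ℝ F]
    [SeminormedAddCommGroup G] [NormedSpace ℝ G] (e : E ≃ₗᵢ[ℝ] F) {T : F →L[ℝ] G}
    {g : StrongDual ℝ F}
    (h : HasUniqueNormPreservingExtension (T.comp (e : E →L[ℝ] F)) (g.comp (e : E →L[ℝ] F))) :
    HasUniqueNormPreservingExtension T g := by
  refine (existsUnique_congr fun H => ?_).mp h
  rw [g.opNorm_comp_linearIsometryEquiv]
  exact and_congr_left' (e.surjective.forall (p := fun y => H (T y) = g y)).symm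

theorem eq_of_map_eq_of_norm_eq_norm_map {V W : Type*} [NormedAddCommGroup V] [NormedSpace ℝ V]
    [StrictConvexSpace ℝ V] [SeminormedAddCommGroup W] [NormedSpace ℝ W] {L : V →L[ℝ] W}
    (hL : ‖L‖ ≤ 1) {v₁ v₂ : V} (hL₁₂ : L v₁ = L v₂) (h₁ : ‖v₁‖ = ‖L v₁‖) (h₂ : ‖v₂‖ = ‖L v₁‖) :
    v₁ = v₂ := by
  refine eq_of_norm_eq_of_norm_add_eq (h₁.trans h₂.symm) (le_antisymm (norm_add_le _ _) ?_)
  calc ‖v₁‖ + ‖v₂‖ = ‖L (v₁ + v₂)‖ := by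
        rw [map_add, ← hL₁₂, ← two_smul ℝ, norm_smul, h₁, h₂, Real.norm_two, two_mul]
    _ ≤ ‖v₁ + v₂‖ := (L.le_of_opNorm_le hL _).trans_eq (one_mul _)

section TaylorFoguel

variable {X : Type*} [NormedAddCommGroup X] [NormedSpace ℝ X]

theorem hasUniqueNormPreservingExtension_subtypeL [StrictConvexSpace ℝ (StrongDual ℝ X)]
    (Y : Subspace ℝ X) (g : StrongDual ℝ Y) :
    HasUniqueNormPreservingExtension Y.subtypeL g := by
  have hR : ‖adj Y.subtypeL‖ ≤ 1 := (norm_adj_le _).trans (Submodule.norm_subtypeL_le Y)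
  have hRg : ∀ f : StrongDual ℝ X, (∀ y, f (Y.subtypeL y) = g y) → adj Y.subtypeL f = g :=
    fun f hf => ContinuousLinearMap.ext hf
  obtain ⟨f, hfg, hnf⟩ := exists_extension_norm_eq Y g
  refine ⟨f, ⟨hfg, hnf⟩, fun f' ⟨hf'g, hnf'⟩ => ?_⟩
  refine eq_of_map_eq_of_norm_eq_norm_map hR ((hRg f' hf'g).trans (hRg f hfg).symm) ?_ ?_
  · rw [hRg f' hf'g, hnf']
  · rw [hRg f' hf'g, hnf]

lemma sub_abs_mul_le_norm_comp_ker_mul (f φ : StrongDual ℝ X) {z : X} (hz : φ z = 1) (x : X) :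
    f x - |φ x| * |f z| ≤ ‖f.comp φ.ker.subtypeL‖ * (‖x‖ + |φ x| * ‖z‖) := by
  set y := x - φ x • z
  have hy : y ∈ φ.ker := by simp [y, hz]
  have hfy : f y = f x - φ x * f z := by simp [y]
  have hny : ‖y‖ ≤ ‖x‖ + |φ x| * ‖z‖ := by
    simpa only [norm_smul, Real.norm_eq_abs] using norm_sub_le x (φ x • z)
  calc f x - |φ x| * |f z| ≤ f y := by
        rw [hfy, ← abs_mul]
        linarith [le_abs_self (φ x * f z)]
    _ ≤ ‖f.comp φ.ker.subtypeL‖ * ‖y‖ :=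
        (Real.le_norm_self _).trans ((f.comp φ.ker.subtypeL).le_opNorm ⟨y, hy⟩)
    _ ≤ _ := by gcongr

lemma exists_almost_norming_of_norm_add_eq_two {f₁ f₂ : StrongDual ℝ X} (h₁ : ‖f₁‖ ≤ 1)
    (h₂ : ‖f₂‖ ≤ 1) (h : ‖f₁ + f₂‖ = 2) {ε : ℝ} (hε : 0 < ε) :
    ∃ x : X, ‖x‖ ≤ 1 ∧ 1 - ε < f₁ x ∧ |(f₁ - f₂) x| < ε := by
  obtain ⟨x, hx, hlt⟩ : ∃ x : X, ‖x‖ ≤ 1 ∧ 2 - ε < f₁ x + f₂ x := by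
    obtain ⟨x, hx, hlt⟩ := (f₁ + f₂).exists_lt_apply_of_lt_opNorm (r := 2 - ε) (by linarith)
    rcases le_total 0 ((f₁ + f₂) x) with hpos | hneg
    · exact ⟨x, hx.le, by rwa [Real.norm_of_nonneg hpos] at hlt⟩
    · refine ⟨-x, by simpa using hx.le, ?_⟩
      rw [Real.norm_of_nonpos hneg, ← map_neg] at hlt
      exact hlt
  have hle : ∀ f : StrongDual ℝ X, ‖f‖ ≤ 1 → f x ≤ 1 := fun f hf =>
    (Real.le_norm_self _).trans ((f.le_of_opNorm_le_of_le hf hx).trans_eq (one_mul 1))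
  have hf₁ := hle f₁ h₁
  have hf₂ := hle f₂ h₂
  refine ⟨x, hx, by linarith, ?_⟩
  rw [sub_apply, abs_sub_lt_iff]
  constructor <;> linarith

theorem norm_comp_subtypeL_ker_sub_eq_one {f₁ f₂ : StrongDual ℝ X} (h₁ : ‖f₁‖ = 1)
    (h₂ : ‖f₂‖ = 1) (h : ‖f₁ + f₂‖ = 2) (hne : f₁ ≠ f₂) :
    ‖f₁.comp (f₁ - f₂).ker.subtypeL‖ = 1 := by
  set g := f₁.comp (f₁ - f₂).ker.subtypeL
  obtain ⟨z, hz⟩ : ∃ z, (f₁ - f₂) z = 1 := by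
    obtain ⟨x, hx⟩ := DFunLike.ne_iff.mp (sub_ne_zero.mpr hne)
    exact ⟨((f₁ - f₂) x)⁻¹ • x, by simpa using inv_mul_cancel₀ hx⟩
  refine le_antisymm ?_ ?_
  · exact h₁ ▸ norm_le_of_apply_eq (Submodule.norm_subtypeL_le _) fun _ => rfl
  set C := 1 + |f₁ z| + ‖g‖ * ‖z‖
  have hC : 0 < C := by positivity
  have hε : ∀ ε > 0, 1 ≤ ‖g‖ + ε * C := by
    intro ε hε
    obtain ⟨x, hx, hf₁x, hφx⟩ := exists_almost_norming_of_norm_add_eq_two h₁.le h₂.le h hε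
    have hkey := sub_abs_mul_le_norm_comp_ker_mul f₁ (f₁ - f₂) hz x
    have hRHS : ‖g‖ * (‖x‖ + |(f₁ - f₂) x| * ‖z‖) ≤ ‖g‖ * (1 + ε * ‖z‖) := by gcongr
    have hLHS : |(f₁ - f₂) x| * |f₁ z| ≤ ε * |f₁ z| := by gcongr
    linarith
  refine le_of_forall_pos_le_add fun δ hδ => ?_
  simpa [div_mul_cancel₀ _ hC.ne'] using hε (δ / C) (by positivity)

theorem strictConvexSpace_dual_of_hasUniqueNormPreservingExtension
    (h : ∀ Y : Subspace ℝ X, IsClosed (Y : Set X) →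
      ∀ g : StrongDual ℝ Y, HasUniqueNormPreservingExtension Y.subtypeL g) :
    StrictConvexSpace ℝ (StrongDual ℝ X) := by
  refine StrictConvexSpace.of_norm_add_ne_two fun f₁ f₂ h₁ h₂ hne h₁₂ => hne ?_
  set Y := (f₁ - f₂).ker
  have hg := norm_comp_subtypeL_ker_sub_eq_one h₁ h₂ h₁₂ hne
  have hf₂ : ∀ y : Y, f₂ y = f₁ y := fun y =>
    (sub_eq_zero.mp ((f₁ - f₂).apply_val_ker y)).symm
  exact (h Y (ContinuousLinearMap.isClosed_ker _) (f₁.comp Y.subtypeL)).unique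
    ⟨fun _ => rfl, h₁.trans hg.symm⟩ ⟨hf₂, h₂.trans hg.symm⟩

end TaylorFoguel

theorem totally_smooth_iff_property_U_and_strictly_convex_dual_general
    {X : Type*} [NormedAddCommGroup X] [NormedSpace ℝ X] :
    ((∀ f : StrongDual ℝ X, ∃! F : StrongDual ℝ (StrongDual ℝ (StrongDual ℝ X)),
        (∀ x : X, F (inclusionInDoubleDual ℝ X x) = f x) ∧ ‖F‖ = ‖f‖) ∧
      StrictConvexSpace ℝ (StrongDual ℝ X)) ↔
    (∀ Y : Subspace ℝ X, IsClosed (Y : Set X) →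
      ∀ g : StrongDual ℝ Y, ∃! F : StrongDual ℝ (StrongDual ℝ (StrongDual ℝ X)),
        (∀ y : Y, F (inclusionInDoubleDual ℝ X (y : X)) = g y) ∧ ‖F‖ = ‖g‖) := by
  constructor
  · rintro ⟨hU, hSC⟩ Y - g
    exact (hasUniqueNormPreservingExtension_subtypeL Y g).comp (Submodule.norm_subtypeL_le Y)
      (inclusionInDoubleDual_norm_le ℝ X) hU
  · intro h
    refine ⟨fun f => ?_, strictConvexSpace_dual_of_hasUniqueNormPreservingExtension
      fun Y hY g => .of_comp_inclusionInDoubleDual (Submodule.norm_subtypeL_le Y) (h Y hY g)⟩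
    exact HasUniqueNormPreservingExtension.of_comp_linearIsometryEquiv
      (LinearIsometryEquiv.ofTop X (⊤ : Subspace ℝ X) rfl) (h ⊤ isClosed_univ _)

/-- `X` is totally smooth in its bidual (every closed subspace of `X` has property U in
`X**`) iff `X` has property U in `X**` and `X*` is strictly convex. -/
theorem totally_smooth_iff_property_U_and_strictly_convex_dual
    {X : Type*} [NormedAddCommGroup X] [NormedSpace ℝ X] [CompleteSpace X] :
    ((∀ f : StrongDual ℝ X, ∃! F : StrongDual ℝ (StrongDual ℝ (StrongDual ℝ X)),
        (∀ x : X, F (inclusionInDoubleDual ℝ X x) = f x) ∧ ‖F‖ = ‖f‖) ∧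
      StrictConvexSpace ℝ (StrongDual ℝ X)) ↔
    (∀ Y : Subspace ℝ X, IsClosed (Y : Set X) →
      ∀ g : StrongDual ℝ Y, ∃! F : StrongDual ℝ (StrongDual ℝ (StrongDual ℝ X)),
        (∀ y : Y, F (inclusionInDoubleDual ℝ X (y : X)) = g y) ∧ ‖F‖ = ‖g‖) :=
  totally_smooth_iff_property_U_and_strictly_convex_dual_general
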